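/- Let F : ℝ² → ℝ be three times continuously differentiable. Fix (x,y) ∈ ℝ² and define U(ε) = F(x + ε·F_y(x,y), y − ε·F_x(x,y)), where F_x, F_y are the partial derivatives of F. Then U is three times differentiable at 0 and U'''(0) = F_y(x,y)·∂_x(H(F))(x,y) − F_x(x,y)·∂_y(H(F))(x,y), where H(F) = F_xx·F_y² − 2·F_xy·F_x·F_y + F_yy·F_x². That is, the coefficient of ε³ in the Taylor expansion of U at ε = 0 equals (1/6) times the derivative of H(F) along the vector field V = F_y·∂_x − F_x·∂_y. -/

import Mathlib

/-!
Along the line `ε ↦ p + ε v` with `v = (F_y, -F_x)(p)` one has `U'''(0) = ∂_v³F(p)`, and since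
mixed partials commute, `∂_v³F = F_y² ∂_v F_xx - 2 F_x F_y ∂_v F_xy + F_x² ∂_v F_yy` at `p`.
Differentiating `H(F)` along `v` by the product rule gives these terms plus terms built from the
Hessian `A` of `F` at `p` alone; those add up to `2 vᵀ A J A v` for a quarter turn `J`, which
vanishes because `A J A` is antisymmetric.
-/

/-- Partial derivative in the first variable of a function `ℝ × ℝ → ℝ`. -/
noncomputable def pdx (F : ℝ × ℝ → ℝ) (p : ℝ × ℝ) : ℝ := fderiv ℝ F p (1, 0)

/-- Partial derivative in the second variable of a function `ℝ × ℝ → ℝ`. -/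
noncomputable def pdy (F : ℝ × ℝ → ℝ) (p : ℝ × ℝ) : ℝ := fderiv ℝ F p (0, 1)

/-- `H(F) = F_xx F_y² - 2 F_xy F_x F_y + F_yy F_x²`. -/
noncomputable def hessH (F : ℝ × ℝ → ℝ) (p : ℝ × ℝ) : ℝ :=
  pdx (pdx F) p * (pdy F p) ^ 2 - 2 * pdx (pdy F) p * pdx F p * pdy F p
    + pdy (pdy F) p * (pdx F p) ^ 2

section DirDeriv

variable {E G : Type*} [NormedAddCommGroup E] [NormedSpace ℝ E]
  [NormedAddCommGroup G] [NormedSpace ℝ G]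

noncomputable def dirDeriv (v : E) (f : E → G) (q : E) : G := fderiv ℝ f q v

theorem ContDiff.dirDeriv {f : E → G} {n : WithTop ℕ∞} (hf : ContDiff ℝ (n + 1) f) (v : E) :
    ContDiff ℝ n (dirDeriv v f) :=
  (hf.fderiv_right le_rfl).clm_apply contDiff_const

theorem deriv_comp_add_smul {f : E → G} (hf : Differentiable ℝ f) (p v : E) :
    deriv (fun t : ℝ => f (p + t • v)) = fun t => dirDeriv v f (p + t • v) := by
  funext t
  have hline : HasDerivAt (fun t : ℝ => p + t • v) v t := by
    simpa using ((hasDerivAt_id t).smul_const v).const_add p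
  exact ((hf _).hasFDerivAt.comp_hasDerivAt t hline).deriv

theorem iteratedDeriv_comp_add_smul {f : E → G} {n : ℕ} (hf : ContDiff ℝ n f) (p v : E) :
    iteratedDeriv n (fun t : ℝ => f (p + t • v)) = fun t => (dirDeriv v)^[n] f (p + t • v) := by
  induction n generalizing f with
  | zero => simp
  | succ n ih =>
    rw [iteratedDeriv_succ', deriv_comp_add_smul (hf.differentiable (by simp)),
      ih (hf.dirDeriv v), Function.iterate_succ_apply]

theorem dirDeriv_dirDeriv_apply {f : E → G} (hf : ContDiff ℝ 2 f) (u w q : E) :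
    dirDeriv u (dirDeriv w f) q = fderiv ℝ (fderiv ℝ f) q u w := by
  have hd : DifferentiableAt ℝ (fderiv ℝ f) q :=
    ((hf.fderiv_right (m := 1) le_rfl).differentiable one_ne_zero).differentiableAt
  change fderiv ℝ (fun z => fderiv ℝ f z w) q u = _
  simp [fderiv_clm_apply hd (differentiableAt_const w)]

theorem dirDeriv_comm {f : E → G} (hf : ContDiff ℝ 2 f) (u w : E) :
    dirDeriv u (dirDeriv w f) = dirDeriv w (dirDeriv u f) := by
  funext q
  rw [dirDeriv_dirDeriv_apply hf, dirDeriv_dirDeriv_apply hf,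
    (hf.contDiffAt.isSymmSndFDerivAt (by simp [minSmoothness_of_isRCLikeNormedField])).eq]

end DirDeriv

theorem dirDeriv_prod (f : ℝ × ℝ → ℝ) (a b : ℝ) (q : ℝ × ℝ) :
    dirDeriv (a, b) f q = a * pdx f q + b * pdy f q := by
  have hab : ((a, b) : ℝ × ℝ) = a • (1, 0) + b • (0, 1) := by simp
  rw [dirDeriv, hab, map_add, map_smul, map_smul]
  rfl

theorem pdx_dirDeriv {f : ℝ × ℝ → ℝ} (hf : ContDiff ℝ 2 f) (v : ℝ × ℝ) :
    pdx (dirDeriv v f) = dirDeriv v (pdx f) :=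
  dirDeriv_comm hf (1, 0) v

theorem pdy_dirDeriv {f : ℝ × ℝ → ℝ} (hf : ContDiff ℝ 2 f) (v : ℝ × ℝ) :
    pdy (dirDeriv v f) = dirDeriv v (pdy f) :=
  dirDeriv_comm hf (0, 1) v

theorem pdy_pdx {f : ℝ × ℝ → ℝ} (hf : ContDiff ℝ 2 f) : pdy (pdx f) = pdx (pdy f) :=
  dirDeriv_comm hf (0, 1) (1, 0)

theorem dirDeriv_dirDeriv_prod {f : ℝ × ℝ → ℝ} (hf : ContDiff ℝ 2 f) (a b : ℝ) (q : ℝ × ℝ) :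
    dirDeriv (a, b) (dirDeriv (a, b) f) q =
      a ^ 2 * pdx (pdx f) q + 2 * a * b * pdx (pdy f) q + b ^ 2 * pdy (pdy f) q := by
  rw [dirDeriv_prod, pdx_dirDeriv hf, pdy_dirDeriv hf, dirDeriv_prod, dirDeriv_prod, pdy_pdx hf]
  ring

theorem dirDeriv_hessH {F : ℝ × ℝ → ℝ} (hF : ContDiff ℝ 3 F) (v p : ℝ × ℝ) :
    dirDeriv v (hessH F) p =
      dirDeriv v (pdx (pdx F)) p * pdy F p ^ 2 - 2 * dirDeriv v (pdx (pdy F)) p * pdx F p * pdy F p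
        + dirDeriv v (pdy (pdy F)) p * pdx F p ^ 2
      + 2 * (pdx (pdx F) p * pdy F p * dirDeriv v (pdy F) p
        - pdx (pdy F) p * (dirDeriv v (pdx F) p * pdy F p + pdx F p * dirDeriv v (pdy F) p)
        + pdy (pdy F) p * pdx F p * dirDeriv v (pdx F) p) := by
  have hx : ContDiff ℝ 2 (pdx F) := hF.dirDeriv (1, 0)
  have hy : ContDiff ℝ 2 (pdy F) := hF.dirDeriv (0, 1)
  have dx : DifferentiableAt ℝ (pdx F) p := hx.differentiable two_ne_zero p
  have dy : DifferentiableAt ℝ (pdy F) p := hy.differentiable two_ne_zero p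
  have dxx : DifferentiableAt ℝ (pdx (pdx F)) p :=
    (hx.dirDeriv (1, 0)).differentiable one_ne_zero p
  have dxy : DifferentiableAt ℝ (pdx (pdy F)) p :=
    (hy.dirDeriv (1, 0)).differentiable one_ne_zero p
  have dyy : DifferentiableAt ℝ (pdy (pdy F)) p :=
    (hy.dirDeriv (0, 1)).differentiable one_ne_zero p
  have hH : HasFDerivAt (hessH F) _ p :=
    ((dxx.hasFDerivAt.mul (dy.hasFDerivAt.pow 2)).sub
      (((dxy.hasFDerivAt.const_mul 2).mul dx.hasFDerivAt).mul dy.hasFDerivAt)).add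
      (dyy.hasFDerivAt.mul (dx.hasFDerivAt.pow 2))
  rw [dirDeriv, hH.fderiv]
  simp only [Nat.add_one_sub_one, pow_one, nsmul_eq_mul, Nat.cast_ofNat, Pi.mul_apply, smul_add,
    add_apply, sub_apply, smul_apply, smul_eq_mul, dirDeriv]
  ring

/-- For a `C³` function `F`, the function `U(ε) = F(x + ε F_y, y - ε F_x)` is three times
differentiable and `U'''(0)` equals the derivative of `H(F)` along the field
`V = F_y ∂_x - F_x ∂_y`. -/
theorem third_deriv_eq_deriv_of_hess_along_skew_gradient
    (F : ℝ × ℝ → ℝ) (hF : ContDiff ℝ 3 F) (x y : ℝ)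
    (U : ℝ → ℝ)
    (hU : U = fun ε : ℝ => F (x + ε * pdy F (x, y), y - ε * pdx F (x, y))) :
    ContDiff ℝ 3 U ∧
      iteratedDeriv 3 U 0 =
        pdy F (x, y) * pdx (hessH F) (x, y) - pdx F (x, y) * pdy (hessH F) (x, y) := by
  set v : ℝ × ℝ := (pdy F (x, y), -pdx F (x, y)) with hv
  have hUline : U = fun ε : ℝ => F ((x, y) + ε • v) := by
    rw [hU, hv]
    ext ε
    simp [sub_eq_add_neg]
  have hF2 : ContDiff ℝ 2 F := hF.of_le (by norm_num)
  have hx : ContDiff ℝ 2 (pdx F) := hF.dirDeriv (1, 0)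
  have hy : ContDiff ℝ 2 (pdy F) := hF.dirDeriv (0, 1)
  refine ⟨hUline ▸ hF.comp (contDiff_const.add (contDiff_id.smul contDiff_const)), ?_⟩
  calc iteratedDeriv 3 U 0 = dirDeriv v (dirDeriv v (dirDeriv v F)) (x, y) := by
        simp [hUline, iteratedDeriv_comp_add_smul hF]
    _ = pdy F (x, y) ^ 2 * dirDeriv v (pdx (pdx F)) (x, y)
          - 2 * pdy F (x, y) * pdx F (x, y) * dirDeriv v (pdx (pdy F)) (x, y)
          + pdx F (x, y) ^ 2 * dirDeriv v (pdy (pdy F)) (x, y) := by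
        rw [hv, dirDeriv_dirDeriv_prod (hF.dirDeriv _), pdx_dirDeriv hF2, pdx_dirDeriv hx,
          pdy_dirDeriv hF2, pdx_dirDeriv hy, pdy_dirDeriv hy]
        ring
    _ = dirDeriv v (hessH F) (x, y) := by
        rw [dirDeriv_hessH hF, hv, dirDeriv_prod (pdx F), dirDeriv_prod (pdy F), pdy_pdx hF2]
        ring
    _ = _ := by
        rw [hv, dirDeriv_prod]
        ring
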